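/- Consider the fractional hedonic game induced by a star with center r and k ≤ 5 leaves (r values each leaf at 1; each leaf values r at 1 and other leaves at 0). Then a popular partition exists. In particular, for k ≤ 3 the grand coalition {r, ℓ1, …, ℓk} is popular. -/
import Mathlib


/-- A partition of the agent set `N` into coalitions: each agent `i` is assigned
the coalition `part i` containing her, and coalitions of members coincide. -/
structure HPartition (N : Type*) [Fintype N] [DecidableEq N] where
  part : N → Finset N
  mem_self : ∀ i, i ∈ part i
  eq_of_mem : ∀ i j, j ∈ part i → part j = part i

open Classical in
/-- Popularity margin `φ(π, π')`: number of agents strictly preferring `π`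
minus the number strictly preferring `π'`. -/
noncomputable def margin {N : Type*} [Fintype N] [DecidableEq N]
    (u : N → Finset N → ℝ) (π π' : HPartition N) : ℤ :=
  ((Finset.univ.filter fun i : N => u i (π'.part i) < u i (π.part i)).card : ℤ) -
  ((Finset.univ.filter fun i : N => u i (π.part i) < u i (π'.part i)).card : ℤ)

/-- A partition is popular if it never loses a pairwise vote. -/
def Popular {N : Type*} [Fintype N] [DecidableEq N]
    (u : N → Finset N → ℝ) (π : HPartition N) : Prop :=
  ∀ π' : HPartition N, 0 ≤ margin u π π'

/-- Fractional hedonic game utility of agent `i` in coalition `S`. -/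
noncomputable def fhgU {N : Type*} [DecidableEq N] (v : N → N → ℝ) (i : N) (S : Finset N) : ℝ :=
  (∑ j ∈ S.erase i, v i j) / (S.card : ℝ)

/-- The partition consisting of the single grand coalition. -/
def grand (N : Type*) [Fintype N] [DecidableEq N] : HPartition N :=
  ⟨fun _ => Finset.univ, fun i => Finset.mem_univ i, fun _ _ _ => rfl⟩

/-- Star valuations: `none` is the center `r`, `some i` are the `k` leaves. -/
noncomputable def starV (k : ℕ) : Option (Fin k) → Option (Fin k) → ℝ := fun i j =>
  match i, j with
  | none, some _ => 1
  | some _, none => 1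
  | _, _ => 0

open Finset

namespace StarAux

variable {k : ℕ}

lemma starV_leaf_eq (i : Fin k) (x : Option (Fin k)) :
    starV k (some i) x = if x = none then 1 else 0 := by
  cases x <;> rfl

lemma fhgU_center (S : Finset (Option (Fin k))) :
    fhgU (starV k) none S = ((S.erase none).card : ℝ) / S.card := by
  unfold fhgU
  congr 1
  have h : ∀ x ∈ S.erase none, starV k none x = 1 := by
    intro x hx
    have hx' : x ≠ none := Finset.ne_of_mem_erase hx
    cases x with
    | none => exact absurd rfl hx'
    | some j => rfl
  rw [Finset.sum_congr rfl h, Finset.sum_const, nsmul_eq_mul, mul_one]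

lemma fhgU_leaf (i : Fin k) (S : Finset (Option (Fin k))) :
    fhgU (starV k) (some i) S = (if none ∈ S then (1:ℝ) else 0) / S.card := by
  classical
  unfold fhgU
  congr 1
  calc ∑ x ∈ S.erase (some i), starV k (some i) x
      = ∑ x ∈ S.erase (some i), if x = none then (1:ℝ) else 0 :=
        Finset.sum_congr rfl fun x _ => starV_leaf_eq i x
    _ = if none ∈ S.erase (some i) then (1:ℝ) else 0 := by
        rw [Finset.sum_ite_eq' (S.erase (some i)) none (fun _ => (1:ℝ))]
    _ = if none ∈ S then (1:ℝ) else 0 := by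
        congr 1
        simp [Finset.mem_erase]

open Classical in
/-- The set of leaves sharing a coalition with the center. -/
noncomputable def leaves (π : HPartition (Option (Fin k))) : Finset (Fin k) :=
  univ.filter fun j => none ∈ π.part (some j)

lemma mem_leaves {π : HPartition (Option (Fin k))} {j : Fin k} :
    j ∈ leaves π ↔ none ∈ π.part (some j) := by
  classical
  simp [leaves]

lemma part_none_eq (π : HPartition (Option (Fin k))) :
    π.part none = insert none ((leaves π).map Function.Embedding.some) := by
  ext x
  cases x with
  | none => simp [π.mem_self none]
  | some j =>
      simp only [Finset.mem_insert, Finset.mem_map, Function.Embedding.some_apply,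
        Option.some.injEq, reduceCtorEq, false_or]
      constructor
      · intro h
        refine ⟨j, ?_, rfl⟩
        rw [mem_leaves, π.eq_of_mem none (some j) h]
        exact π.mem_self none
      · rintro ⟨b, hb, rfl⟩
        rw [mem_leaves] at hb
        rw [π.eq_of_mem (some b) none hb]
        exact π.mem_self (some b)

lemma part_some_of_mem {π : HPartition (Option (Fin k))} {j : Fin k} (hj : j ∈ leaves π) :
    π.part (some j) = π.part none :=
  (π.eq_of_mem (some j) none (mem_leaves.1 hj)).symm

lemma none_notMem_map (B : Finset (Fin k)) :
    (none : Option (Fin k)) ∉ B.map Function.Embedding.some := by simp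

lemma u_none (π : HPartition (Option (Fin k))) :
    fhgU (starV k) none (π.part none) = ((leaves π).card : ℝ) / ((leaves π).card + 1) := by
  rw [part_none_eq π, fhgU_center, Finset.erase_insert (none_notMem_map _),
    Finset.card_insert_of_notMem (none_notMem_map _), Finset.card_map]
  push_cast
  ring_nf

lemma u_some (π : HPartition (Option (Fin k))) (j : Fin k) :
    fhgU (starV k) (some j) (π.part (some j)) =
      if j ∈ leaves π then 1 / ((leaves π).card + 1 : ℝ) else 0 := by
  by_cases hj : j ∈ leaves π
  · rw [part_some_of_mem hj, part_none_eq π, fhgU_leaf, if_pos hj,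
      Finset.card_insert_of_notMem (none_notMem_map _), Finset.card_map,
      if_pos (Finset.mem_insert_self _ _)]
    push_cast
    ring_nf
  · rw [fhgU_leaf, if_neg hj]
    have h : none ∉ π.part (some j) := fun h => hj (mem_leaves.2 h)
    simp [h]

lemma card_filter_option (P : Option (Fin k) → Prop) [DecidablePred P] :
    (univ.filter P).card
      = (if P none then 1 else 0) + (univ.filter fun j : Fin k => P (some j)).card := by
  classical
  rw [_root_.univ_option]
  have : (insertNone (univ : Finset (Fin k))) = insert none (univ.map Function.Embedding.some) := by
    ext x; cases x <;> simp
  rw [this, Finset.filter_insert]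
  have hmap : ((univ.map (Function.Embedding.some : Fin k ↪ Option (Fin k))).filter P).card
      = (univ.filter fun j : Fin k => P (some j)).card := by
    rw [Finset.filter_map, Finset.card_map]
    rfl
  split
  · rw [Finset.card_insert_of_notMem (by simp), hmap, add_comm]
  · rw [hmap, zero_add]

lemma frac_lt_frac (m a : ℕ) : (m : ℝ) / (m + 1) < (a : ℝ) / (a + 1) ↔ m < a := by
  rw [div_lt_div_iff₀ (by positivity) (by positivity)]
  constructor
  · intro h
    by_contra hc
    push_neg at hc
    have : (a : ℝ) ≤ m := by exact_mod_cast hc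
    nlinarith
  · intro h
    have : (m : ℝ) < a := by exact_mod_cast h
    nlinarith

lemma one_div_lt_one_div (m a : ℕ) : (1 : ℝ) / (m + 1) < 1 / (a + 1) ↔ a < m := by
  rw [div_lt_div_iff₀ (by positivity) (by positivity)]
  constructor
  · intro h
    by_contra hc
    push_neg at hc
    have : (m : ℝ) ≤ a := by exact_mod_cast hc
    nlinarith
  · intro h
    have : (a : ℝ) < m := by exact_mod_cast h
    nlinarith

lemma leafset_iff (A B : Finset (Fin k)) (j : Fin k) :
    ((if j ∈ B then 1 / ((B.card : ℝ) + 1) else 0)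
      < (if j ∈ A then 1 / ((A.card : ℝ) + 1) else 0)) ↔
      (j ∈ if A.card < B.card then A else A \ B) := by
  by_cases hja : j ∈ A <;> by_cases hjb : j ∈ B
  · rw [if_pos hja, if_pos hjb, one_div_lt_one_div]
    split_ifs with h
    · simp [hja]
      omega
    · simp only [Finset.mem_sdiff, hja, hjb, true_and, not_true, iff_false, not_lt]
      omega
  · rw [if_pos hja, if_neg hjb]
    have hpos : (0:ℝ) < 1 / ((A.card : ℝ) + 1) := by positivity
    split_ifs with h
    · simpa [hja] using hpos
    · simpa [Finset.mem_sdiff, hja, hjb] using hpos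
  · rw [if_neg hja, if_pos hjb]
    have hneg : ¬ (1 / ((B.card : ℝ) + 1) < 0) := not_lt.2 (by positivity)
    split_ifs with h <;> simp [Finset.mem_sdiff, hja, hneg] <;> positivity
  · rw [if_neg hja, if_neg hjb]
    split_ifs with h <;> simp [Finset.mem_sdiff, hja]

lemma popular_aux (hk : k ≤ 5) (π : HPartition (Option (Fin k)))
    (ha : (leaves π).card = min k 3) : Popular (fhgU (starV k)) π := by
  classical
  intro π'
  set A := leaves π with hA
  set B := leaves π' with hB
  set a := A.card with haa
  set m := B.card with hmm
  unfold margin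
  rw [card_filter_option, card_filter_option]
  have huπn := u_none π
  have huπ'n := u_none π'
  rw [← hA, ← haa] at huπn
  rw [← hB, ← hmm] at huπ'n
  -- center comparisons
  have hc1 : (fhgU (starV k) none (π'.part none) < fhgU (starV k) none (π.part none)) ↔ m < a := by
    rw [huπn, huπ'n, frac_lt_frac]
  have hc2 : (fhgU (starV k) none (π.part none) < fhgU (starV k) none (π'.part none)) ↔ a < m := by
    rw [huπn, huπ'n, frac_lt_frac]
  -- leaf sets
  have hl1 : (univ.filter fun j : Fin k =>
      fhgU (starV k) (some j) (π'.part (some j)) < fhgU (starV k) (some j) (π.part (some j)))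
      = if a < m then A else A \ B := by
    ext j
    rw [Finset.mem_filter, u_some, u_some, ← hA, ← hB, ← haa, ← hmm]
    simp only [mem_univ, true_and]
    exact leafset_iff A B j
  have hl2 : (univ.filter fun j : Fin k =>
      fhgU (starV k) (some j) (π.part (some j)) < fhgU (starV k) (some j) (π'.part (some j)))
      = if m < a then B else B \ A := by
    ext j
    rw [Finset.mem_filter, u_some, u_some, ← hA, ← hB, ← haa, ← hmm]
    simp only [mem_univ, true_and]
    exact leafset_iff B A j
  rw [hl1, hl2]
  simp only [hc1, hc2]
  have e1 : (A ∩ B).card + (A \ B).card = a := Finset.card_inter_add_card_sdiff A B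
  have e2 : (B ∩ A).card + (B \ A).card = m := Finset.card_inter_add_card_sdiff B A
  have e3 : (A ∩ B).card = (B ∩ A).card := by rw [Finset.inter_comm]
  have e4 : (B \ A).card + a ≤ k := by
    have h1 : B \ A ⊆ Aᶜ := by
      intro x hx
      simp only [Finset.mem_compl]
      exact (Finset.mem_sdiff.1 hx).2
    have h2 : (B \ A).card ≤ Aᶜ.card := Finset.card_le_card h1
    have h3 : Aᶜ.card = k - a := by
      rw [Finset.card_compl, Fintype.card_fin]
    have h4 : a ≤ k := by
      calc a ≤ Fintype.card (Fin k) := Finset.card_le_univ A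
        _ = k := Fintype.card_fin k
    omega
  have hm : m ≤ k := by
    calc m ≤ Fintype.card (Fin k) := Finset.card_le_univ B
      _ = k := Fintype.card_fin k
  rcases lt_trichotomy a m with h | h | h
  · rw [if_neg (by omega), if_pos h, if_pos h, if_neg (by omega)]
    omega
  · rw [if_neg (by omega), if_neg (by omega), if_neg (by omega), if_neg (by omega)]
    omega
  · rw [if_pos h, if_neg (by omega), if_neg (by omega), if_pos h]
    omega

lemma popular_of_parts (hk : k ≤ 5) (π : HPartition (Option (Fin k))) (A : Finset (Fin k))
    (hpart : ∀ j : Fin k, none ∈ π.part (some j) ↔ j ∈ A)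
    (hcard : A.card = min k 3) : Popular (fhgU (starV k)) π := by
  apply popular_aux hk
  have h : leaves π = A := by
    ext j
    rw [mem_leaves]
    simpa using hpart j
  rw [h, hcard]

end StarAux

/-- For a star with at most 5 leaves a popular partition exists; in particular,
for at most 3 leaves the grand coalition is popular. -/
theorem fhg_star_le5_popular_exists (k : ℕ) (hk : k ≤ 5) :
    (∃ π : HPartition (Option (Fin k)), Popular (fhgU (starV k)) π) ∧
    (k ≤ 3 → Popular (fhgU (starV k)) (grand (Option (Fin k)))) := by
  classical
  constructor
  · -- center with min k 3 leaves
    set A : Finset (Fin k) := Finset.univ.filter (fun j : Fin k => (j : ℕ) < 3) with hAdef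
    set C : Finset (Option (Fin k)) := insert none (A.map Function.Embedding.some) with hCdef
    have hmemC : ∀ j : Fin k, some j ∈ C ↔ j ∈ A := by
      intro j; simp [hCdef]
    have hnoneC : none ∈ C := by simp [hCdef]
    refine ⟨⟨fun i => match i with
      | none => C
      | some j => if j ∈ A then C else {some j}, ?_, ?_⟩,
      StarAux.popular_of_parts hk _ A ?_ ?_⟩
    · intro i
      match i with
      | none => exact hnoneC
      | some j =>
          by_cases hj : j ∈ A
          · simp only [if_pos hj]
            exact (hmemC j).2 hj
          · simp [if_neg hj]
    · intro i j hj
      match i with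
      | none =>
          match j with
          | none => rfl
          | some b =>
              have hb : b ∈ A := (hmemC b).1 hj
              simp [if_pos hb]
      | some x =>
          by_cases hx : x ∈ A
          · simp only [if_pos hx] at hj
            match j with
            | none => simp [if_pos hx]
            | some b =>
                have hb : b ∈ A := (hmemC b).1 hj
                simp [if_pos hb, if_pos hx]
          · simp only [if_neg hx, Finset.mem_singleton] at hj
            subst hj
            rfl
    · intro j
      show none ∈ (if j ∈ A then C else {some j}) ↔ j ∈ A
      by_cases hj : j ∈ A
      · simp [hj, hnoneC]
      · simp [hj]
    · rw [hAdef]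
      interval_cases k <;> decide
  · intro hk3
    refine StarAux.popular_of_parts hk _ Finset.univ ?_ ?_
    · intro j
      simp [grand]
    · rw [Finset.card_univ, Fintype.card_fin]
      omega
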